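/- arXiv:0811.4565 — 3 statements merged into one kernel-verified Lean document; each statement's English description precedes it below -/
import Mathlib

section
/- As z → 0⁺, E_1(z) + γ + ln z → 0, where E_1 is the exponential integral and γ is the Euler–Mascheroni constant; that is, E_1(z) = -γ - ln z + o(1) as z → 0⁺. -/
open MeasureTheory Real Filter

/-- The exponential integral `E_1(z) = ∫₁^∞ e^{-zt}/t dt` (for `z > 0`). -/
noncomputable def expInt (n : ℕ) (z : ℝ) : ℝ :=
  ∫ t in Set.Ioi (1 : ℝ), Real.exp (-z * t) * t ^ (-(n : ℝ))

/-!
Integrating by parts on `(z, ∞)` gives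
`E_1(z) + log z = ∫_z^∞ e^{-t} log t dt + (1 - e^{-z}) log z`.
As `z → 0⁺` the integral tends to `∫_0^∞ e^{-t} log t dt = Γ'(1) = -γ`,
and the boundary term is at most `|z log z|`, which tends to `0`.
-/

open Set Topology

theorem tendsto_setIntegral_Ioi_nhdsGT {E : Type*} [NormedAddCommGroup E] [NormedSpace ℝ E]
    {f : ℝ → E} {a : ℝ} (hf : IntegrableOn f (Ioi a)) :
    Tendsto (fun x => ∫ t in Ioi x, f t) (𝓝[>] a) (𝓝 (∫ t in Ioi a, f t)) := by
  have hprim : Tendsto (fun x => ∫ t in a..x, f t) (𝓝[>] a) (𝓝 0) := by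
    have hint : IntervalIntegrable f volume (min a a) (max a (a + 1)) := by
      rw [min_self, max_eq_right (by linarith),
        intervalIntegrable_iff_integrableOn_Ioc_of_le (by linarith)]
      exact hf.mono_set Ioc_subset_Ioi_self
    have hcont := intervalIntegral.continuousWithinAt_primitive (measure_singleton a) hint
    rw [ContinuousWithinAt, intervalIntegral.integral_same] at hcont
    exact hcont.mono_left (nhdsWithin_le_of_mem (Icc_mem_nhdsGT (by linarith)))
  have hsplit : ∀ x ∈ Ioi a, (∫ t in Ioi a, f t) - ∫ t in a..x, f t = ∫ t in Ioi x, f t := by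
    intro x hx
    rw [sub_eq_iff_eq_add', intervalIntegral.integral_interval_add_Ioi hf
      (hf.mono_set (Ioi_subset_Ioi (le_of_lt hx)))]
  simpa using (tendsto_const_nhds.sub hprim).congr' (eventually_nhdsWithin_of_forall hsplit)

theorem integrableOn_exp_neg_mul_inv {a : ℝ} (ha : 0 < a) :
    IntegrableOn (fun t => exp (-t) * t⁻¹) (Ioi a) := by
  refine ((exp_neg_integrableOn_Ioi a one_pos).const_mul a⁻¹).mono' (by fun_prop) ?_
  filter_upwards [ae_restrict_mem measurableSet_Ioi] with t ht
  rw [norm_mul, norm_of_nonneg (exp_pos _).le, norm_of_nonneg (inv_pos.2 (ha.trans ht)).le,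
    neg_one_mul, mul_comm]
  exact mul_le_mul_of_nonneg_right (inv_anti₀ ha (le_of_lt ht)) (exp_pos _).le

theorem integrableOn_exp_neg_mul_log : IntegrableOn (fun t => exp (-t) * log t) (Ioi 0) := by
  have hIoc : IntegrableOn (fun t => exp (-t) * log t) (Ioc 0 1) :=
    (intervalIntegrable_iff_integrableOn_Ioc_of_le zero_le_one).1 <|
      intervalIntegral.intervalIntegrable_log'.continuousOn_mul (by fun_prop)
  have hIoi : IntegrableOn (fun t => exp (-t) * log t) (Ioi 1) := by
    refine ((GammaIntegral_convergent two_pos).mono_set (Ioi_subset_Ioi zero_le_one)).mono'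
      (by fun_prop) ?_
    filter_upwards [ae_restrict_mem measurableSet_Ioi] with t (ht : 1 < t)
    rw [norm_mul, norm_of_nonneg (exp_pos _).le, norm_of_nonneg (log_nonneg ht.le),
      show (2 : ℝ) - 1 = 1 by norm_num, rpow_one]
    exact mul_le_mul_of_nonneg_left (log_le_self (by linarith)) (exp_pos _).le
  simpa [Ioc_union_Ioi_eq_Ioi zero_le_one] using hIoc.union hIoi

theorem integral_exp_neg_mul_log :
    ∫ t in Ioi 0, exp (-t) * log t = -eulerMascheroniConstant := by
  have hGamma : Complex.Gamma =ᶠ[𝓝 1] Complex.GammaIntegral := by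
    filter_upwards [(isOpen_lt continuous_const Complex.continuous_re).mem_nhds
      (by norm_num : (0 : ℝ) < (1 : ℂ).re)] with s hs
    exact Complex.Gamma_eq_integral hs
  have hderiv := ((Complex.hasDerivAt_GammaIntegral (s := 1) (by norm_num)).congr_of_eventuallyEq
    hGamma).unique Complex.hasDerivAt_Gamma_one
  have hreal : ∫ t : ℝ in Ioi 0, (t : ℂ) ^ ((1 : ℂ) - 1) * (log t * exp (-t))
      = ((∫ t in Ioi 0, exp (-t) * log t : ℝ) : ℂ) := by
    refine (setIntegral_congr_fun measurableSet_Ioi fun t _ => ?_).trans integral_complex_ofReal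
    rw [sub_self, Complex.cpow_zero, one_mul, Complex.ofReal_mul, mul_comm]
  exact_mod_cast hreal ▸ hderiv

theorem integral_Ioi_exp_neg_mul_log {z : ℝ} (hz : 0 < z) :
    ∫ t in Ioi z, exp (-t) * log t = exp (-z) * log z + ∫ t in Ioi z, exp (-t) * t⁻¹ := by
  have hderiv : ∀ t ∈ Ici z, HasDerivAt (fun t => -(exp (-t) * log t))
      (exp (-t) * log t - exp (-t) * t⁻¹) t := fun t ht =>
    (((hasDerivAt_neg t).exp).mul (hasDerivAt_log (hz.trans_le ht).ne')).neg.congr_deriv (by ring)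
  have hdecay : Tendsto (fun t => -(exp (-t) * log t)) atTop (𝓝 0) := by
    refine squeeze_zero_norm' ?_ (by simpa using tendsto_pow_mul_exp_neg_atTop_nhds_zero 1)
    filter_upwards [eventually_ge_atTop 1] with t ht
    rw [norm_neg, norm_mul, norm_of_nonneg (exp_pos _).le, norm_of_nonneg (log_nonneg ht),
      mul_comm t]
    exact mul_le_mul_of_nonneg_left (log_le_self (by linarith)) (exp_pos _).le
  have hlog := integrableOn_exp_neg_mul_log.mono_set (Ioi_subset_Ioi hz.le)
  have hinv := integrableOn_exp_neg_mul_inv hz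
  have hparts := integral_Ioi_of_hasDerivAt_of_tendsto' hderiv (hlog.sub hinv) hdecay
  rw [integral_sub hlog hinv] at hparts
  linarith

theorem expInt_one_eq_integral_Ioi {z : ℝ} (hz : 0 < z) :
    expInt 1 z = ∫ t in Ioi z, exp (-t) * t⁻¹ := by
  have h := integral_comp_mul_left_Ioi (fun t => exp (-t) * t⁻¹) 1 hz
  rw [mul_one, smul_eq_mul] at h
  have hscale : ∫ t in Ioi 1, exp (-(z * t)) * (z * t)⁻¹ = z⁻¹ * expInt 1 z := by
    rw [expInt, ← integral_const_mul]
    refine setIntegral_congr_fun measurableSet_Ioi fun t _ => ?_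
    simp only [Nat.cast_one, rpow_neg_one, mul_inv, neg_mul]
    ring
  exact mul_left_cancel₀ (inv_ne_zero hz.ne') (hscale ▸ h)

theorem expInt_one_add_log {z : ℝ} (hz : 0 < z) :
    expInt 1 z + log z = (∫ t in Ioi z, exp (-t) * log t) + (1 - exp (-z)) * log z := by
  rw [expInt_one_eq_integral_Ioi hz, integral_Ioi_exp_neg_mul_log hz]
  ring

theorem tendsto_one_sub_exp_neg_mul_log_nhdsGT_zero :
    Tendsto (fun z => (1 - exp (-z)) * log z) (𝓝[>] 0) (𝓝 0) := by
  have hmul_log : Tendsto (fun z => z * log z) (𝓝[>] 0) (𝓝 0) := by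
    simpa using (continuous_mul_log.tendsto 0).mono_left nhdsWithin_le_nhds
  refine squeeze_zero_norm' ?_ (by simpa using hmul_log.norm)
  filter_upwards [self_mem_nhdsWithin] with z (hz : 0 < z)
  rw [norm_mul, norm_eq_abs, norm_eq_abs, abs_of_pos hz,
    abs_of_nonneg (sub_nonneg.2 (exp_le_one_iff.2 (by linarith)))]
  exact mul_le_mul_of_nonneg_right (by linarith [one_sub_le_exp_neg z]) (abs_nonneg _)

/-- `E_1(z) = -γ - ln z + o(1)` as `z → 0⁺`, i.e.
`E_1(z) + γ + ln z → 0` as `z → 0⁺`. -/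
theorem stmt_10 :
    Filter.Tendsto (fun z : ℝ => expInt 1 z + Real.eulerMascheroniConstant + Real.log z)
      (nhdsWithin 0 (Set.Ioi 0)) (nhds 0) := by
  have hint : Tendsto (fun z => ∫ t in Ioi z, exp (-t) * log t) (𝓝[>] 0)
      (𝓝 (-eulerMascheroniConstant)) :=
    integral_exp_neg_mul_log ▸ tendsto_setIntegral_Ioi_nhdsGT integrableOn_exp_neg_mul_log
  have hsum := (hint.add tendsto_one_sub_exp_neg_mul_log_nhdsGT_zero).add_const
    eulerMascheroniConstant
  rw [add_zero, neg_add_cancel] at hsum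
  refine hsum.congr' (eventually_nhdsWithin_of_forall fun z (hz : 0 < z) => ?_)
  dsimp only
  rw [add_right_comm (expInt 1 z), expInt_one_add_log hz]
end

section
/- Fix ρ > 0 and n_r = 1. Then lim_{n_d → ∞} (1/2) log₂(1 + ρ n_d e^{(1+ρ)/α} E_{n_d+1}((1+ρ)/α)) = (1/2) log₂(1 + ρ), for any fixed α > 0. -/
open MeasureTheory Real Filter

/-!
On `t > 1` the integrand `e^{-zt} t^{-m}` lies between `e^{m} e^{-(z+m)t}` (from `log t ≤ t - 1`)
and `e^{-z} t^{-m}`, so `1/(z+m) ≤ e^z E_m(z) ≤ 1/(m-1)`. Hence `n e^z E_{n+1}(z) → 1`, and the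
theorem follows by continuity of `x ↦ (1/2) log₂(1 + ρx)` at `1`.
-/

open Set Topology

lemma integrableOn_expInt_integrand {m : ℕ} (hm : 1 < m) {z : ℝ} (hz : 0 ≤ z) :
    IntegrableOn (fun t : ℝ => exp (-z * t) * t ^ (-(m : ℝ))) (Ioi 1) := by
  have hdecay : -(m : ℝ) < -1 := by
    have : (1 : ℝ) < m := by exact_mod_cast hm
    linarith
  refine (integrableOn_Ioi_rpow_of_lt hdecay one_pos).mono'
    (by fun_prop : Measurable _).aestronglyMeasurable ?_
  filter_upwards [ae_restrict_mem measurableSet_Ioi] with t (ht : 1 < t)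
  have hpow : 0 ≤ t ^ (-(m : ℝ)) := rpow_nonneg (by linarith) _
  rw [norm_mul, norm_of_nonneg (exp_pos _).le, norm_of_nonneg hpow]
  exact mul_le_of_le_one_left hpow (exp_le_one_iff.2 (by nlinarith))

lemma expInt_le {m : ℕ} (hm : 1 < m) {z : ℝ} (hz : 0 ≤ z) :
    expInt m z ≤ exp (-z) / (m - 1) := by
  have hm' : (1 : ℝ) < m := by exact_mod_cast hm
  have hdecay : -(m : ℝ) < -1 := by linarith
  calc expInt m z ≤ ∫ t in Ioi (1 : ℝ), exp (-z) * t ^ (-(m : ℝ)) := by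
        refine setIntegral_mono_on (integrableOn_expInt_integrand hm hz)
          ((integrableOn_Ioi_rpow_of_lt hdecay one_pos).const_mul _) measurableSet_Ioi ?_
        intro t (ht : 1 < t)
        exact mul_le_mul_of_nonneg_right (exp_le_exp.2 (by nlinarith))
          (rpow_nonneg (by linarith) _)
    _ = exp (-z) / (m - 1) := by
        rw [integral_const_mul, integral_Ioi_rpow_of_lt hdecay one_pos, one_rpow]
        field_simp [show (m : ℝ) - 1 ≠ 0 by linarith, show -(m : ℝ) + 1 ≠ 0 by linarith]
        ring

lemma exp_neg_div_add_le_expInt {m : ℕ} (hm : 1 < m) {z : ℝ} (hz : 0 ≤ z) :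
    exp (-z) / (z + m) ≤ expInt m z := by
  have hzm : 0 < z + m := by positivity
  calc exp (-z) / (z + m) = ∫ t in Ioi (1 : ℝ), exp m * exp (-(z + m) * t) := by
        rw [integral_const_mul, integral_exp_mul_Ioi (by linarith), mul_one, neg_div_neg_eq,
          mul_div_assoc', ← exp_add]
        field_simp
        ring_nf
    _ ≤ expInt m z := by
        refine setIntegral_mono_on ((integrableOn_exp_mul_Ioi (by linarith) _).const_mul _)
          (integrableOn_expInt_integrand hm hz) measurableSet_Ioi ?_
        intro t (ht : 1 < t)
        have ht0 : 0 < t := by linarith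
        rw [rpow_def_of_pos ht0, ← exp_add, ← exp_add]
        have hlog : log t ≤ t - 1 := log_le_sub_one_of_pos ht0
        have hm0 : (0 : ℝ) ≤ m := m.cast_nonneg
        exact exp_le_exp.2 (by nlinarith)

lemma tendsto_natCast_mul_exp_mul_expInt_succ {z : ℝ} (hz : 0 ≤ z) :
    Tendsto (fun n : ℕ => n * exp z * expInt (n + 1) z) atTop (𝓝 1) := by
  have hexp : exp z * exp (-z) = 1 := by rw [← exp_add, add_neg_cancel, exp_zero]
  have hlower : ∀ n : ℕ, 1 ≤ n → (n : ℝ) / (n + (z + 1)) ≤ n * exp z * expInt (n + 1) z := by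
    intro n hn
    have h := exp_neg_div_add_le_expInt (m := n + 1) (by omega) hz
    push_cast at h
    calc (n : ℝ) / (n + (z + 1)) = n * exp z * (exp (-z) / (z + (n + 1))) := by
          rw [mul_assoc, mul_div_assoc', hexp]; ring_nf
      _ ≤ n * exp z * expInt (n + 1) z := by gcongr
  have hupper : ∀ n : ℕ, 1 ≤ n → n * exp z * expInt (n + 1) z ≤ 1 := by
    intro n hn
    have h := expInt_le (m := n + 1) (by omega) hz
    push_cast at h
    have hn' : (n : ℝ) ≠ 0 := by positivity
    calc n * exp z * expInt (n + 1) z ≤ n * exp z * (exp (-z) / (n + 1 - 1)) := by gcongr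
      _ = 1 := by rw [add_sub_cancel_right, mul_assoc, mul_div_assoc', hexp]; field_simp
  refine tendsto_of_tendsto_of_tendsto_of_le_of_le' (tendsto_natCast_div_add_atTop (z + 1))
    tendsto_const_nhds ?_ ?_
  · filter_upwards [eventually_ge_atTop 1] using hlower
  · filter_upwards [eventually_ge_atTop 1] using hupper

/-- for fixed `ρ, α > 0` (single relay antenna `n_r = 1`),
the capacity upper bound tends to `(1/2) log₂(1+ρ)` as `n_d → ∞`. -/
theorem stmt_13 (ρ α : ℝ) (hρ : 0 < ρ) (hα : 0 < α) :
    Filter.Tendsto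
      (fun nd : ℕ => (1 / 2) * Real.logb 2
        (1 + ρ * nd * Real.exp ((1 + ρ) / α) * expInt (nd + 1) ((1 + ρ) / α)))
      Filter.atTop (nhds ((1 / 2) * Real.logb 2 (1 + ρ))) := by
  have hcap : ContinuousAt (fun x : ℝ => (1 / 2) * logb 2 (1 + ρ * x)) 1 := by
    fun_prop (disch := positivity)
  have hlim := hcap.tendsto.comp (tendsto_natCast_mul_exp_mul_expInt_succ (z := (1 + ρ) / α)
    (by positivity))
  simpa only [Function.comp_def, mul_one, mul_assoc] using hlim
end

section
/- (Minkowski-type lower bound) If X is an n×n random positive definite Hermitian matrix with E[ln det X] finite, then E[log₂ det(I + c X)] ≥ n log₂(1 + c · exp((1/n) E[ln det X])) for every c > 0. -/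
open MeasureTheory Real
open scoped ComplexOrder

/-!
Write `g t = log₂ (1 + c eᵗ)`, a convex function of `t` (its derivative `1 - 1 / (1 + c eᵗ)` is
increasing). Diagonalising `X`, Jensen's inequality for `g` at the logarithms of the eigenvalues
gives the logarithmic form of Minkowski's determinant inequality,
`n g ((1 / n) ln det X) ≤ log₂ det (1 + c X)`, pointwise. Jensen's inequality for `g` once more,
now for the random variable `(1 / n) ln det X`, moves the expectation inside `g`.
-/

namespace Real

variable {b c : ℝ}

theorem convexOn_log_one_add_mul_exp (hc : 0 ≤ c) :
    ConvexOn ℝ Set.univ fun t => log (1 + c * exp t) := by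
  have hpos : ∀ t, 0 < 1 + c * exp t := fun t => by positivity
  have hderiv : ∀ t, HasDerivAt (fun t => log (1 + c * exp t))
      (1 - (1 + c * exp t)⁻¹) t := fun t => by
    convert (((hasDerivAt_exp t).const_mul c).const_add 1).log (hpos t).ne' using 1
    field_simp [(hpos t).ne']
    ring
  refine Monotone.convexOn_univ_of_deriv (fun t => (hderiv t).differentiableAt) ?_
  intro s t hst
  rw [(hderiv s).deriv, (hderiv t).deriv, sub_le_sub_iff_left]
  gcongr

theorem convexOn_logb_one_add_mul_exp (hb : 1 ≤ b) (hc : 0 ≤ c) :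
    ConvexOn ℝ Set.univ fun t => logb b (1 + c * exp t) := by
  have h : (fun t => logb b (1 + c * exp t)) = fun t => (log b)⁻¹ • log (1 + c * exp t) := by
    ext t
    rw [logb, div_eq_inv_mul, smul_eq_mul]
  rw [h]
  exact (convexOn_log_one_add_mul_exp hc).smul (inv_nonneg.2 (log_nonneg hb))

theorem continuous_logb_one_add_mul_exp (hc : 0 ≤ c) :
    Continuous fun t => logb b (1 + c * exp t) :=
  (continuous_const.add (continuous_const.mul continuous_exp)).logb fun t =>
    (by positivity : 0 < 1 + c * exp t).ne'

/-- With `t i = log (x i)` this is Minkowski's inequality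
`∏ (1 + c x i) ^ (1 / n) ≥ 1 + c (∏ x i) ^ (1 / n)`, i.e. its case of diagonal matrices. -/
theorem card_mul_logb_one_add_mul_exp_mean_le {ι : Type*} [Fintype ι] [Nonempty ι]
    (hb : 1 ≤ b) (hc : 0 ≤ c) (t : ι → ℝ) :
    Fintype.card ι * logb b (1 + c * exp ((1 / Fintype.card ι) * ∑ i, t i))
      ≤ ∑ i, logb b (1 + c * exp (t i)) := by
  have hn : (0 : ℝ) < Fintype.card ι := by exact_mod_cast Fintype.card_pos
  have jensen := (convexOn_logb_one_add_mul_exp hb hc).map_sum_le (t := Finset.univ)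
    (w := fun _ => 1 / (Fintype.card ι : ℝ)) (p := t) (fun _ _ => by positivity)
    (by simp [Finset.sum_const, Finset.card_univ]) (fun _ _ => Set.mem_univ _)
  simp only [smul_eq_mul, ← Finset.mul_sum] at jensen
  calc _ ≤ Fintype.card ι * (1 / Fintype.card ι * ∑ i, logb b (1 + c * exp (t i))) := by gcongr
    _ = ∑ i, logb b (1 + c * exp (t i)) := by field_simp

end Real

theorem Matrix.IsHermitian.det_one_add_smul {𝕜 ι : Type*} [RCLike 𝕜] [Fintype ι] [DecidableEq ι]
    {A : Matrix ι ι 𝕜} (hA : A.IsHermitian) (c : ℝ) :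
    (1 + (c : 𝕜) • A).det = ∏ i, ((1 + c * hA.eigenvalues i : ℝ) : 𝕜) := by
  conv_lhs => rw [hA.spectral_theorem]
  rw [← map_one (Unitary.conjStarAlgAut 𝕜 _ hA.eigenvectorUnitary), ← map_smul, ← map_add,
    Unitary.conjStarAlgAut_apply, Matrix.det_mul_right_comm,
    Unitary.mul_star_self_of_mem hA.eigenvectorUnitary.2, one_mul, ← Matrix.diagonal_one,
    ← Matrix.diagonal_smul, Matrix.diagonal_add, Matrix.det_diagonal]
  simp

theorem Matrix.PosDef.card_mul_logb_one_add_mul_exp_le_logb_det {𝕜 ι : Type*} [RCLike 𝕜]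
    [Fintype ι] [DecidableEq ι] [Nonempty ι] {A : Matrix ι ι 𝕜} (hA : A.PosDef) {b c : ℝ}
    (hb : 1 ≤ b) (hc : 0 ≤ c) :
    Fintype.card ι * logb b (1 + c * exp ((1 / Fintype.card ι) * log (RCLike.re A.det)))
      ≤ logb b (RCLike.re (1 + (c : 𝕜) • A).det) := by
  have hpos := hA.eigenvalues_pos
  have hdet : log (RCLike.re A.det) = ∑ i, log (hA.1.eigenvalues i) := by
    rw [hA.1.det_eq_prod_eigenvalues, ← RCLike.ofReal_prod, RCLike.ofReal_re,
      log_prod fun i _ => (hpos i).ne']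
  have hdet' : logb b (RCLike.re (1 + (c : 𝕜) • A).det)
      = ∑ i, logb b (1 + c * exp (log (hA.1.eigenvalues i))) := by
    rw [hA.1.det_one_add_smul, ← RCLike.ofReal_prod, RCLike.ofReal_re,
      logb_prod _ _ fun i _ => by have := hpos i; positivity]
    simp only [exp_log (hpos _)]
  rw [hdet, hdet']
  exact card_mul_logb_one_add_mul_exp_mean_le hb hc _

/-- Minkowski-type lower bound: if `X` is a random `n×n` Hermitian positive
definite complex matrix with `E[ln det X]` finite, then for every `c > 0`,
`E[log₂ det(I + cX)] ≥ n log₂(1 + c exp((1/n) E[ln det X]))`. -/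
theorem stmt_19 {Ω : Type*} [MeasurableSpace Ω] (μ : Measure Ω) [IsProbabilityMeasure μ]
    (n : ℕ) (hn : 0 < n) (X : Ω → Matrix (Fin n) (Fin n) ℂ)
    (hX : ∀ ω, (X ω).PosDef) (c : ℝ) (hc : 0 < c)
    (hint : Integrable (fun ω => Real.log (X ω).det.re) μ)
    (hint' : Integrable (fun ω => Real.logb 2 ((1 + (c : ℂ) • X ω).det.re)) μ) :
    (n : ℝ) * Real.logb 2 (1 + c * Real.exp ((1 / n) * ∫ ω, Real.log (X ω).det.re ∂μ))
      ≤ ∫ ω, Real.logb 2 ((1 + (c : ℂ) • X ω).det.re) ∂μ := by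
  have : Nonempty (Fin n) := Fin.pos_iff_nonempty.mp hn
  set g := fun t => logb 2 (1 + c * exp t)
  set T := fun ω => (1 / (n : ℝ)) * log (X ω).det.re
  have hT : Integrable T μ := hint.const_mul _
  have hgT_le : ∀ ω, n * g (T ω) ≤ logb 2 ((1 + (c : ℂ) • X ω).det.re) := fun ω => by
    have := (hX ω).card_mul_logb_one_add_mul_exp_le_logb_det one_le_two hc.le
    rwa [Fintype.card_fin] at this
  have hgT : Integrable (fun ω => g (T ω)) μ := by
    refine (hint'.const_mul (n : ℝ)⁻¹).mono'
      ((continuous_logb_one_add_mul_exp hc.le).comp_aestronglyMeasurable hT.1)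
      (.of_forall fun ω => ?_)
    rw [norm_of_nonneg (logb_nonneg one_lt_two (le_add_of_nonneg_right (by positivity))),
      le_inv_mul_iff₀ (by positivity)]
    exact hgT_le ω
  calc (n : ℝ) * g ((1 / n) * ∫ ω, log (X ω).det.re ∂μ) = n * g (∫ ω, T ω ∂μ) := by
        rw [integral_const_mul]
    _ ≤ n * ∫ ω, g (T ω) ∂μ := by
        gcongr
        exact (convexOn_logb_one_add_mul_exp one_le_two hc.le).map_integral_le
          (continuous_logb_one_add_mul_exp hc.le).continuousOn isClosed_univ
          (.of_forall fun _ => Set.mem_univ _) hT hgT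
    _ = ∫ ω, n * g (T ω) ∂μ := (integral_const_mul _ _).symm
    _ ≤ ∫ ω, logb 2 ((1 + (c : ℂ) • X ω).det.re) ∂μ :=
        integral_mono (hgT.const_mul _) hint' hgT_le
end
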